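/- Let k be a field and f a polynomial automorphism of A^n_k of degree ≥ 2 such that X_f ∩ I_f = ∅, where I_f is the indeterminacy locus at infinity and X_f the image of the hyperplane at infinity minus I_f. Then deg(f^m) = deg(f)^m and X_{f^m} ⊆ X_f for every m ≥ 1. -/

import Mathlib

/-!
Substituting `X i ↦ t • X i` turns a polynomial into a polynomial in `t` whose coefficients are
its homogeneous components, and it commutes with substitution. Reading off the coefficient of
`t ^ (deg f * deg g)` shows that this component of `f ∘ g` is `top f ∘ top g`, which is
therefore the top part of `f ∘ g` whenever it is nonzero. Writing `T = top f`, induction gives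
`deg f^m = (deg f)^m` and `top f^m = T^m`, provided no iterate of `T` vanishes. The hypothesis
`X_f ∩ I_f = ∅` says exactly that `T` maps `{y | T y ≠ 0}` into itself, so all iterates are
nonzero along the orbit of a point where `T ≠ 0`, and such a point exists since `k` is infinite.
Finally `top f^m = T ∘ T^(m-1)` only takes values in the image of `T`.
-/

open MvPolynomial

/-- Composition of polynomial endomorphisms of affine `n`-space. -/
noncomputable def mvComp {k : Type*} [CommSemiring k] {n : ℕ}
    (g f : Fin n → MvPolynomial (Fin n) k) : Fin n → MvPolynomial (Fin n) k :=
  fun i => MvPolynomial.bind₁ f (g i)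

/-- The degree of a polynomial endomorphism of affine `n`-space. -/
noncomputable def mvDeg {k : Type*} [CommSemiring k] {n : ℕ}
    (f : Fin n → MvPolynomial (Fin n) k) : ℕ :=
  Finset.univ.sup fun i => (f i).totalDegree

/-- The highest homogeneous part of a polynomial endomorphism. -/
noncomputable def topPart {k : Type*} [CommSemiring k] {n : ℕ}
    (f : Fin n → MvPolynomial (Fin n) k) : Fin n → MvPolynomial (Fin n) k :=
  fun i => MvPolynomial.homogeneousComponent (mvDeg f) (f i)

open scoped Polynomial

namespace Polynomial

variable {A : Type*} [CommSemiring A]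

theorem coeff_prod_sum_of_natDegree_le {ι : Type*} (s : Finset ι) (f : ι → A[X])
    (n : ι → ℕ) (h : ∀ i ∈ s, (f i).natDegree ≤ n i) :
    (∏ i ∈ s, f i).coeff (∑ i ∈ s, n i) = ∏ i ∈ s, (f i).coeff (n i) := by
  induction s using Finset.cons_induction with
  | empty => simp
  | cons i s hi ih =>
    have hs : ∀ j ∈ s, (f j).natDegree ≤ n j := fun j hj => h j (Finset.mem_cons_of_mem hj)
    rw [Finset.prod_cons, Finset.sum_cons, Finset.prod_cons,
      coeff_mul_add_eq_of_natDegree_le (h i (Finset.mem_cons_self i s))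
        ((natDegree_prod_le _ _).trans (Finset.sum_le_sum hs)), ih hs]

variable {σ : Type*} {q : σ → A[X]} {e : ℕ}

theorem natDegree_finsuppProd_pow_le (hq : ∀ i, (q i).natDegree ≤ e) (a : σ →₀ ℕ) :
    (a.prod fun i k => q i ^ k).natDegree ≤ a.degree * e := by
  rw [Finsupp.degree_apply, Finset.sum_mul]
  exact (natDegree_prod_le _ _).trans <| Finset.sum_le_sum fun i _ =>
    natDegree_pow_le.trans (Nat.mul_le_mul_left _ (hq i))

theorem coeff_finsuppProd_pow_degree_mul (hq : ∀ i, (q i).natDegree ≤ e) (a : σ →₀ ℕ) :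
    (a.prod fun i k => q i ^ k).coeff (a.degree * e) = a.prod fun i k => (q i).coeff e ^ k := by
  rw [Finsupp.degree_apply, Finset.sum_mul, Finsupp.prod, Finsupp.prod,
    coeff_prod_sum_of_natDegree_le _ _ _ fun i _ =>
      natDegree_pow_le.trans (Nat.mul_le_mul_left _ (hq i))]
  exact Finset.prod_congr rfl fun i _ => coeff_pow_of_natDegree_le (hq i)

end Polynomial

namespace MvPolynomial

variable {A σ R : Type*} [CommSemiring A] [CommSemiring R] [Algebra R A]
  {q : σ → A[X]} {e : ℕ}

theorem natDegree_aeval_le (hq : ∀ i, (q i).natDegree ≤ e) (p : MvPolynomial σ R) :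
    (aeval q p).natDegree ≤ p.totalDegree * e := by
  conv_lhs => rw [p.as_sum]
  rw [map_sum]
  refine Polynomial.natDegree_sum_le_of_forall_le _ _ fun a ha => ?_
  rw [aeval_monomial, Polynomial.algebraMap_apply]
  exact (Polynomial.natDegree_C_mul_le _ _).trans <|
    (Polynomial.natDegree_finsuppProd_pow_le hq a).trans <|
      Nat.mul_le_mul_right _ (le_totalDegree ha)

theorem coeff_aeval_mul_of_totalDegree_le (hq : ∀ i, (q i).natDegree ≤ e) (he : 0 < e)
    {p : MvPolynomial σ R} {d : ℕ} (hp : p.totalDegree ≤ d) :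
    (aeval q p).coeff (d * e) = aeval (fun i => (q i).coeff e) (homogeneousComponent d p) := by
  classical
  conv_lhs => rw [p.as_sum]
  rw [homogeneousComponent_apply, Finset.sum_filter, map_sum, map_sum,
    Polynomial.finsetSum_coeff]
  refine Finset.sum_congr rfl fun a ha => ?_
  rw [aeval_monomial, Polynomial.algebraMap_apply, Polynomial.coeff_C_mul]
  split_ifs with hd
  · rw [← hd, Polynomial.coeff_finsuppProd_pow_degree_mul hq, aeval_monomial]
  · have hlt : a.degree < d := lt_of_le_of_ne ((le_totalDegree ha).trans hp) hd
    rw [map_zero, Polynomial.coeff_eq_zero_of_natDegree_lt, mul_zero]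
    exact (Polynomial.natDegree_finsuppProd_pow_le hq a).trans_lt
      (Nat.mul_lt_mul_of_pos_right hlt he)

variable {τ : Type*}

noncomputable def homogeneousExpansion :
    MvPolynomial σ R →ₐ[R] Polynomial (MvPolynomial σ R) :=
  aeval fun i => Polynomial.C (X i) * Polynomial.X

theorem homogeneousExpansion_monomial (a : σ →₀ ℕ) (c : R) :
    homogeneousExpansion (monomial a c) = Polynomial.monomial a.degree (monomial a c) := by
  rw [homogeneousExpansion, aeval_monomial, monomial_eq, ← Polynomial.C_mul_X_pow_eq_monomial]
  simp only [mul_pow, Finsupp.prod_mul, ← map_pow, ← map_finsuppProd,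
    Polynomial.algebraMap_apply, algebraMap_eq, map_mul]
  simp only [Finsupp.prod, Finset.prod_pow_eq_pow_sum, Finsupp.degree_apply, mul_assoc]

theorem coeff_homogeneousExpansion (p : MvPolynomial σ R) (D : ℕ) :
    (homogeneousExpansion p).coeff D = homogeneousComponent D p := by
  induction p using MvPolynomial.induction_on' with
  | monomial a c =>
    rw [homogeneousExpansion_monomial, Polynomial.coeff_monomial,
      homogeneousComponent_of_mem (isHomogeneous_monomial c rfl)]
    simp only [eq_comm]
  | add p q hp hq => rw [map_add, Polynomial.coeff_add, hp, hq, map_add]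

theorem homogeneousComponent_totalDegree_ne_zero {p : MvPolynomial σ R} (hp : p ≠ 0) :
    homogeneousComponent p.totalDegree p ≠ 0 := by
  obtain ⟨a, ha, hdeg⟩ := Finset.exists_mem_eq_sup p.support (support_nonempty.mpr hp)
    fun s => s.sum fun _ e => e
  have hdeg' : a.degree = p.totalDegree := hdeg.symm
  refine ne_of_apply_ne (coeff a) ?_
  rw [coeff_homogeneousComponent, if_pos hdeg', coeff_zero]
  exact mem_support_iff.mp ha

theorem natDegree_homogeneousExpansion (p : MvPolynomial σ R) :
    (homogeneousExpansion p).natDegree = p.totalDegree := by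
  rcases eq_or_ne p 0 with rfl | hp
  · simp
  refine le_antisymm (Polynomial.natDegree_le_iff_coeff_eq_zero.2 fun D hD => ?_)
    (Polynomial.le_natDegree_of_ne_zero ?_)
  · rw [coeff_homogeneousExpansion]
    exact homogeneousComponent_eq_zero _ _ hD
  · rw [coeff_homogeneousExpansion]
    exact homogeneousComponent_totalDegree_ne_zero hp

theorem homogeneousExpansion_bind₁ (g : σ → MvPolynomial τ R) (p : MvPolynomial σ R) :
    homogeneousExpansion (bind₁ g p) = aeval (fun i => homogeneousExpansion (g i)) p :=
  comp_aeval_apply _ _ _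

variable {g : σ → MvPolynomial τ R}

theorem totalDegree_bind₁_le (hg : ∀ i, (g i).totalDegree ≤ e) (p : MvPolynomial σ R) :
    (bind₁ g p).totalDegree ≤ p.totalDegree * e := by
  rw [← natDegree_homogeneousExpansion, homogeneousExpansion_bind₁]
  exact natDegree_aeval_le (fun i => (natDegree_homogeneousExpansion _).trans_le (hg i)) p

theorem homogeneousComponent_bind₁_mul (hg : ∀ i, (g i).totalDegree ≤ e) (he : 0 < e)
    {p : MvPolynomial σ R} {d : ℕ} (hp : p.totalDegree ≤ d) :
    homogeneousComponent (d * e) (bind₁ g p) =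
      bind₁ (fun i => homogeneousComponent e (g i)) (homogeneousComponent d p) := by
  rw [← coeff_homogeneousExpansion, homogeneousExpansion_bind₁,
    coeff_aeval_mul_of_totalDegree_le
      (fun i => (natDegree_homogeneousExpansion _).trans_le (hg i)) he hp]
  simp only [coeff_homogeneousExpansion]
  rfl

end MvPolynomial

section PolynomialMap

variable {k : Type*} [CommSemiring k] {n : ℕ}

theorem totalDegree_le_mvDeg (f : Fin n → MvPolynomial (Fin n) k) (i : Fin n) :
    (f i).totalDegree ≤ mvDeg f :=
  Finset.le_sup (f := fun j => (f j).totalDegree) (Finset.mem_univ i)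

theorem mvDeg_mvComp_le (f g : Fin n → MvPolynomial (Fin n) k) :
    mvDeg (mvComp f g) ≤ mvDeg f * mvDeg g :=
  Finset.sup_le fun i _ => (totalDegree_bind₁_le (totalDegree_le_mvDeg g) (f i)).trans
    (Nat.mul_le_mul_right _ (totalDegree_le_mvDeg f i))

theorem homogeneousComponent_mvComp (f : Fin n → MvPolynomial (Fin n) k)
    {g : Fin n → MvPolynomial (Fin n) k} (hg : 0 < mvDeg g) (i : Fin n) :
    homogeneousComponent (mvDeg f * mvDeg g) (mvComp f g i) =
      mvComp (topPart f) (topPart g) i :=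
  homogeneousComponent_bind₁_mul (totalDegree_le_mvDeg g) hg (totalDegree_le_mvDeg f i)

theorem mvDeg_mvComp_of_ne_zero {f g : Fin n → MvPolynomial (Fin n) k} (hg : 0 < mvDeg g)
    (hfg : mvComp (topPart f) (topPart g) ≠ 0) : mvDeg (mvComp f g) = mvDeg f * mvDeg g := by
  obtain ⟨i, hi⟩ := Function.ne_iff.1 hfg
  refine (mvDeg_mvComp_le f g).antisymm (le_trans ?_ (totalDegree_le_mvDeg _ i))
  by_contra! hlt
  exact hi (by rw [← homogeneousComponent_mvComp f hg, homogeneousComponent_eq_zero _ _ hlt]; rfl)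

theorem topPart_mvComp_of_ne_zero {f g : Fin n → MvPolynomial (Fin n) k} (hg : 0 < mvDeg g)
    (hfg : mvComp (topPart f) (topPart g) ≠ 0) :
    topPart (mvComp f g) = mvComp (topPart f) (topPart g) :=
  funext fun i => by
    rw [topPart, mvDeg_mvComp_of_ne_zero hg hfg, homogeneousComponent_mvComp f hg]

theorem mvDeg_X [Nontrivial k] (hn : 0 < n) :
    mvDeg (X : Fin n → MvPolynomial (Fin n) k) = 1 := by
  have : Nonempty (Fin n) := ⟨⟨0, hn⟩⟩
  simp [mvDeg, totalDegree_X, Finset.sup_const Finset.univ_nonempty]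

theorem topPart_X [Nontrivial k] (hn : 0 < n) :
    topPart (X : Fin n → MvPolynomial (Fin n) k) = X :=
  funext fun i => by
    rw [topPart, mvDeg_X hn, homogeneousComponent_eq_self (isHomogeneous_X k i)]

theorem topPart_ne_zero {f : Fin n → MvPolynomial (Fin n) k} (hf : 0 < mvDeg f) :
    topPart f ≠ 0 := by
  have huniv : (Finset.univ : Finset (Fin n)).Nonempty :=
    Finset.nonempty_iff_ne_empty.2 fun h => hf.ne' (by rw [mvDeg, h, Finset.sup_empty]; rfl)
  obtain ⟨i, -, hi⟩ := Finset.exists_mem_eq_sup _ huniv fun j => (f j).totalDegree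
  have hfi : f i ≠ 0 := fun h => hf.ne' (by rw [mvDeg, hi, h, totalDegree_zero])
  refine Function.ne_iff.2 ⟨i, ?_⟩
  rw [topPart, show mvDeg f = (f i).totalDegree from hi]
  exact homogeneousComponent_totalDegree_ne_zero hfi

noncomputable def evalMap (g : Fin n → MvPolynomial (Fin n) k) (y : Fin n → k) : Fin n → k :=
  fun i => eval y (g i)

theorem evalMap_mvComp (f g : Fin n → MvPolynomial (Fin n) k) :
    evalMap (mvComp f g) = evalMap f ∘ evalMap g :=
  funext fun y => funext fun i => by
    change aeval y (bind₁ g (f i)) = aeval (fun j => aeval y (g j)) (f i)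
    exact aeval_bind₁ _ _ _

theorem evalMap_iterate_mvComp (f : Fin n → MvPolynomial (Fin n) k) (m : ℕ) :
    evalMap ((mvComp f)^[m] X) = (evalMap f)^[m] := by
  induction m with
  | zero =>
    ext y i
    simp only [Function.iterate_zero, id, evalMap, eval_X]
  | succ m ih => rw [Function.iterate_succ_apply', Function.iterate_succ', evalMap_mvComp, ih]

end PolynomialMap

section Dynamics

variable {k : Type*} [CommRing k] [IsDomain k] [Infinite k] {n : ℕ}

theorem exists_evalMap_ne_zero {g : Fin n → MvPolynomial (Fin n) k} (hg : g ≠ 0) :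
    ∃ y, evalMap g y ≠ 0 := by
  obtain ⟨i, hi⟩ := Function.ne_iff.1 hg
  by_contra! h
  refine hi (MvPolynomial.funext fun y => ?_)
  rw [Pi.zero_apply, map_zero]
  exact congrFun (h y) i

theorem iterate_mvComp_ne_zero {g : Fin n → MvPolynomial (Fin n) k} (hg : g ≠ 0)
    (hreg : ∀ y, evalMap g y ≠ 0 → evalMap g (evalMap g y) ≠ 0) (m : ℕ) :
    (mvComp g)^[m + 1] X ≠ 0 := by
  obtain ⟨y, hy⟩ := exists_evalMap_ne_zero hg
  have horbit := (show Set.MapsTo (evalMap g) {y | evalMap g y ≠ 0} {y | evalMap g y ≠ 0}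
    from hreg).iterate m hy
  intro h
  apply horbit
  rw [← Function.iterate_succ_apply' (evalMap g), ← evalMap_iterate_mvComp, h]
  ext i
  simp [evalMap]

theorem mvDeg_and_topPart_iterate_mvComp {f : Fin n → MvPolynomial (Fin n) k}
    (hf : 0 < mvDeg f) (hreg : ∀ y, evalMap (topPart f) y ≠ 0 →
      evalMap (topPart f) (evalMap (topPart f) y) ≠ 0) (m : ℕ) :
    mvDeg ((mvComp f)^[m] X) = mvDeg f ^ m ∧
      topPart ((mvComp f)^[m] X) = (mvComp (topPart f))^[m] X := by
  induction m with
  | zero =>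
    have hn : 0 < n := Nat.pos_of_ne_zero fun h => by subst h; simp [mvDeg] at hf
    exact ⟨mvDeg_X hn, topPart_X hn⟩
  | succ m ih =>
    obtain ⟨hdeg, htop⟩ := ih
    have hpos : 0 < mvDeg ((mvComp f)^[m] X) := hdeg ▸ pow_pos hf m
    have hne : mvComp (topPart f) (topPart ((mvComp f)^[m] X)) ≠ 0 := by
      rw [htop, ← Function.iterate_succ_apply' (mvComp (topPart f))]
      exact iterate_mvComp_ne_zero (topPart_ne_zero hf) hreg m
    rw [Function.iterate_succ_apply', mvDeg_mvComp_of_ne_zero hpos hne,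
      topPart_mvComp_of_ne_zero hpos hne, hdeg, htop, pow_succ', Function.iterate_succ_apply']
    exact ⟨rfl, rfl⟩

end Dynamics

theorem stmt_11_general (k : Type*) [Field k] [IsAlgClosed k] (n : ℕ)
    (f : Fin n → MvPolynomial (Fin n) k)
    (hdf : 2 ≤ mvDeg f)
    -- `X_f ∩ I_f = ∅` : every point of `X_f` avoids the indeterminacy locus of `f`
    (hreg : ∀ y : Fin n → k, (∃ i, MvPolynomial.eval y (topPart f i) ≠ 0) →
      ∃ j, MvPolynomial.eval (fun i => MvPolynomial.eval y (topPart f i))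
        (topPart f j) ≠ 0) :
    ∀ m : ℕ, 1 ≤ m →
      mvDeg ((mvComp f)^[m] (fun i => MvPolynomial.X i)) = (mvDeg f) ^ m ∧
      -- `X_{f^m} ⊆ X_f` (stated on the level of affine cones)
      ∀ y : Fin n → k, ∃ w : Fin n → k,
        ∀ i, MvPolynomial.eval y
            (topPart ((mvComp f)^[m] (fun j => MvPolynomial.X j)) i) =
          MvPolynomial.eval w (topPart f i) := by
  intro m hm
  obtain ⟨m, rfl⟩ := Nat.exists_eq_add_of_le' hm
  obtain ⟨hdeg, htop⟩ := mvDeg_and_topPart_iterate_mvComp (by omega : 0 < mvDeg f)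
    (fun y hy => Function.ne_iff.2 (hreg y (Function.ne_iff.1 hy))) (m + 1)
  refine ⟨hdeg, fun y => ⟨evalMap ((mvComp (topPart f))^[m] X) y, fun i => ?_⟩⟩
  rw [htop, Function.iterate_succ_apply']
  exact congrFun (congrFun (evalMap_mvComp _ _) y) i

theorem stmt_11 (k : Type*) [Field k] [IsAlgClosed k] (n : ℕ)
    (f finv : Fin n → MvPolynomial (Fin n) k)
    (hf1 : ∀ i, MvPolynomial.bind₁ f (finv i) = MvPolynomial.X i)
    (hf2 : ∀ i, MvPolynomial.bind₁ finv (f i) = MvPolynomial.X i)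
    (hdf : 2 ≤ mvDeg f)
    -- `X_f ∩ I_f = ∅` : every point of `X_f` avoids the indeterminacy locus of `f`
    (hreg : ∀ y : Fin n → k, (∃ i, MvPolynomial.eval y (topPart f i) ≠ 0) →
      ∃ j, MvPolynomial.eval (fun i => MvPolynomial.eval y (topPart f i))
        (topPart f j) ≠ 0) :
    ∀ m : ℕ, 1 ≤ m →
      mvDeg ((mvComp f)^[m] (fun i => MvPolynomial.X i)) = (mvDeg f) ^ m ∧
      -- `X_{f^m} ⊆ X_f` (stated on the level of affine cones)
      ∀ y : Fin n → k, ∃ w : Fin n → k,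
        ∀ i, MvPolynomial.eval y
            (topPart ((mvComp f)^[m] (fun j => MvPolynomial.X j)) i) =
          MvPolynomial.eval w (topPart f i) :=
  stmt_11_general k n f hdf hreg
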